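/- Let C ∈ ℝ^{m×(k)} have full column rank with thin QR factorization C = Q_C R_C, let I_* be an index set such that U = C(I_*,:)-based core matrix, i.e., U = Π_{I_*}^T C, and suppose Π_{I_*}^T Q_C has full column rank. Then for any perturbations ΔC and ΔU and any ε > 0: ‖(C + ΔC)(U + ΔU)_ε^†‖₂ ≤ ‖(Π_{I_*}^T Q_C)^†‖₂ (1 + ‖ΔU‖₂/ε) + ‖ΔC‖₂/ε. -/

import Mathlib

/-!
With `A = Π_{I_*}ᵀ Q_C`, the Penrose identity `A G A = A` and full column rank make `G` a left
inverse of `A`, so `C = Q_C R_C = Q_C G A R_C = Q_C G U`. Writing `P = (U + ΔU)_ε^†`,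
`(C + ΔC) P = Q_C G (U + ΔU) P - Q_C G ΔU P + ΔC P`,
and the bound follows from the triangle inequality, since `‖Q_C‖ ≤ 1`, `‖(U + ΔU) P‖ ≤ 1` and
`‖P‖ ≤ 1/ε`.
-/

open Matrix

noncomputable section

/-- `B` is the Moore–Penrose pseudoinverse of `A` (the four Penrose conditions). -/
def IsMP {m n : ℕ} (A : Matrix (Fin m) (Fin n) ℝ) (B : Matrix (Fin n) (Fin m) ℝ) : Prop :=
  A * B * A = A ∧ B * A * B = B ∧ (A * B)ᵀ = A * B ∧ (B * A)ᵀ = B * A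

/-- Euclidean norm of a vector. -/
def enorm2 {a : ℕ} (v : Fin a → ℝ) : ℝ := Real.sqrt (∑ i, (v i) ^ 2)

/-- Spectral (ℓ2 operator) norm of a matrix. -/
def spec {a b : ℕ} (M : Matrix (Fin a) (Fin b) ℝ) : ℝ :=
  sSup {r | ∃ x : Fin b → ℝ, enorm2 x = 1 ∧ r = enorm2 (M.mulVec x)}

/-- Selection matrix whose columns are the columns of the identity indexed by `g`. -/
def sel {a b : ℕ} (g : Fin a → Fin b) : Matrix (Fin b) (Fin a) ℝ :=
  fun i j => if g j = i then 1 else 0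

open scoped Matrix.Norms.L2Operator

namespace Matrix

lemma enorm2_eq_norm_toLp {a : ℕ} (v : Fin a → ℝ) : enorm2 v = ‖WithLp.toLp 2 v‖ := by
  simp [enorm2, EuclideanSpace.norm_eq, sq_abs]

lemma spec_eq_l2_opNorm {a b : ℕ} (M : Matrix (Fin a) (Fin b) ℝ) : spec M = ‖M‖ := by
  rw [l2_opNorm_def, ← ContinuousLinearMap.sSup_sphere_eq_norm, spec]
  congr 1
  ext r
  constructor
  · rintro ⟨x, hx, rfl⟩
    exact ⟨WithLp.toLp 2 x, by simpa [enorm2_eq_norm_toLp] using hx,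
      by simp [enorm2_eq_norm_toLp]⟩
  · rintro ⟨x, hx, rfl⟩
    exact ⟨x.ofLp, by simpa [enorm2_eq_norm_toLp] using hx, by simp [enorm2_eq_norm_toLp]; rfl⟩

variable {m n l r : Type*} [Fintype m] [Fintype n] [Fintype l] [Fintype r]

lemma l2_opNorm_le_one_of_transpose_mul_self_eq_one [DecidableEq n] {Q : Matrix m n ℝ}
    (hQ : Qᵀ * Q = 1) : ‖Q‖ ≤ 1 := by
  have h : ‖Q‖ * ‖Q‖ ≤ 1 := by
    rw [← l2_opNorm_conjTranspose_mul_self, conjTranspose_eq_transpose_of_trivial, hQ,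
      ← diagonal_one, l2_opNorm_diagonal]
    exact pi_norm_le_iff_of_nonneg zero_le_one |>.mpr fun _ => by simp
  nlinarith [norm_nonneg Q]

lemma l2_opNorm_mul_le_of_transpose_mul_self_eq_one [DecidableEq n] [DecidableEq l]
    {Q : Matrix m n ℝ} (hQ : Qᵀ * Q = 1) (A : Matrix n l ℝ) : ‖Q * A‖ ≤ ‖A‖ :=
  (l2_opNorm_mul Q A).trans <| mul_le_of_le_one_left (norm_nonneg A)
    (l2_opNorm_le_one_of_transpose_mul_self_eq_one hQ)

lemma l2_opNorm_mul_diagonal_mul_transpose_le [DecidableEq m] [DecidableEq r]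
    {W : Matrix m r ℝ} {V : Matrix n r ℝ} (hW : Wᵀ * W = 1) (hV : Vᵀ * V = 1) (d : r → ℝ) :
    ‖V * diagonal d * Wᵀ‖ ≤ ‖d‖ := by
  calc ‖V * diagonal d * Wᵀ‖ ≤ ‖V * diagonal d‖ * ‖Wᵀ‖ := l2_opNorm_mul _ _
    _ ≤ ‖diagonal d‖ * 1 := by
        gcongr
        · exact l2_opNorm_mul_le_of_transpose_mul_self_eq_one hV _
        · rw [← conjTranspose_eq_transpose_of_trivial, l2_opNorm_conjTranspose]
          exact l2_opNorm_le_one_of_transpose_mul_self_eq_one hW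
    _ = ‖d‖ := by rw [mul_one, l2_opNorm_diagonal]

lemma mul_eq_one_of_mul_mul_eq_self_of_rank_eq_card [DecidableEq n] {A : Matrix m n ℝ}
    {G : Matrix n m ℝ} (hrank : A.rank = Fintype.card n) (hAGA : A * G * A = A) : G * A = 1 := by
  have hinj : Function.Injective A.mulVec := by
    rw [mulVec_injective_iff, linearIndependent_iff_card_eq_finrank_span, ← hrank,
      rank_eq_finrank_span_cols]
    rfl
  exact ext_iff_mulVec.mpr fun v => hinj <| by
    rw [mulVec_mulVec, ← Matrix.mul_assoc, hAGA, Matrix.one_mulVec]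

/-- The `ε`-truncated pseudoinverse `V Σ_ε⁻¹ Wᵀ` of `W Σ Vᵀ`. -/
def truncPinv [DecidableEq r] (ε : ℝ) (W : Matrix m r ℝ) (σ : r → ℝ) (V : Matrix n r ℝ) :
    Matrix n m ℝ :=
  V * diagonal (fun i => if ε ≤ σ i then (σ i)⁻¹ else 0) * Wᵀ

variable [DecidableEq m] [DecidableEq r] {ε : ℝ} {W : Matrix m r ℝ} {σ : r → ℝ} {V : Matrix n r ℝ}

lemma l2_opNorm_truncPinv_le (hε : 0 < ε) (hW : Wᵀ * W = 1) (hV : Vᵀ * V = 1) :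
    ‖truncPinv ε W σ V‖ ≤ ε⁻¹ := by
  refine (l2_opNorm_mul_diagonal_mul_transpose_le hW hV _).trans <|
    pi_norm_le_iff_of_nonneg (by positivity) |>.mpr fun i => ?_
  split_ifs with h
  · rw [norm_inv, Real.norm_of_nonneg (hε.le.trans h)]
    exact inv_anti₀ hε h
  · simp [hε.le]

lemma l2_opNorm_mul_truncPinv_le_one (hW : Wᵀ * W = 1) (hV : Vᵀ * V = 1) :
    ‖W * diagonal σ * Vᵀ * truncPinv ε W σ V‖ ≤ 1 := by
  have hcollapse : W * diagonal σ * Vᵀ * truncPinv ε W σ V =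
      W * diagonal (fun i => σ i * if ε ≤ σ i then (σ i)⁻¹ else 0) * Wᵀ := by
    simp only [truncPinv, Matrix.mul_assoc]
    rw [← Matrix.mul_assoc Vᵀ, hV, Matrix.one_mul, ← Matrix.mul_assoc (diagonal σ),
      diagonal_mul_diagonal]
  rw [hcollapse]
  refine (l2_opNorm_mul_diagonal_mul_transpose_le hW hW _).trans <|
    pi_norm_le_iff_of_nonneg zero_le_one |>.mpr fun i => ?_
  by_cases h0 : σ i = 0
  · simp [h0]
  · split_ifs <;> simp [h0]

end Matrix

theorem perturbed_trunc_pinv_norm_bound_general {m k p : ℕ} (ε : ℝ) (hε : 0 < ε)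
    (C QC : Matrix (Fin m) (Fin k) ℝ) (RC : Matrix (Fin k) (Fin k) ℝ)
    (hQR : C = QC * RC) (hQC : QCᵀ * QC = 1)
    (f : Fin (k + p) → Fin m)
    (hQCrank : ((sel f)ᵀ * QC).rank = k)
    (G : Matrix (Fin k) (Fin (k + p)) ℝ) (hG : IsMP ((sel f)ᵀ * QC) G)
    (ΔC : Matrix (Fin m) (Fin k) ℝ) (ΔU : Matrix (Fin (k + p)) (Fin k) ℝ)
    -- thin SVD data of U + ΔU, with U = Π_{I_*}ᵀ C
    (W : Matrix (Fin (k + p)) (Fin k) ℝ) (V : Matrix (Fin k) (Fin k) ℝ) (σ : Fin k → ℝ)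
    (hW : Wᵀ * W = 1) (hV : Vᵀ * V = 1)
    (hUΔU : (sel f)ᵀ * C + ΔU = W * Matrix.diagonal σ * Vᵀ) :
    spec ((C + ΔC) * (V * Matrix.diagonal (fun i => if ε ≤ σ i then (σ i)⁻¹ else 0) * Wᵀ))
      ≤ spec G * (1 + spec ΔU / ε) + spec ΔC / ε := by
  set B := W * diagonal σ * Vᵀ
  set P := truncPinv ε W σ V
  have hGA : G * ((sel f)ᵀ * QC) = 1 :=
    mul_eq_one_of_mul_mul_eq_self_of_rank_eq_card (by rw [hQCrank, Fintype.card_fin]) hG.1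
  have hC : C = QC * (G * ((sel f)ᵀ * C)) := by
    rw [hQR, ← Matrix.mul_assoc (sel f)ᵀ, ← Matrix.mul_assoc G, hGA, Matrix.one_mul]
  have hsplit : (C + ΔC) * P = QC * (G * (B * P)) - QC * (G * (ΔU * P)) + ΔC * P := by
    conv_lhs => rw [hC, eq_sub_of_add_eq hUΔU]
    simp only [Matrix.add_mul, Matrix.sub_mul, Matrix.mul_sub, Matrix.mul_assoc]
  have hP : ‖P‖ ≤ ε⁻¹ := l2_opNorm_truncPinv_le hε hW hV
  simp only [spec_eq_l2_opNorm]
  change ‖(C + ΔC) * P‖ ≤ _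
  calc ‖(C + ΔC) * P‖
      ≤ ‖QC * (G * (B * P))‖ + ‖QC * (G * (ΔU * P))‖ + ‖ΔC * P‖ := by
        rw [hsplit]; exact (norm_add_le _ _).trans (by gcongr; exact norm_sub_le _ _)
    _ ≤ ‖G‖ * 1 + ‖G‖ * (‖ΔU‖ * ε⁻¹) + ‖ΔC‖ * ε⁻¹ := by
        grw [l2_opNorm_mul_le_of_transpose_mul_self_eq_one hQC,
          l2_opNorm_mul_le_of_transpose_mul_self_eq_one hQC, l2_opNorm_mul G, l2_opNorm_mul G,
          l2_opNorm_mul ΔU, l2_opNorm_mul ΔC, hP, l2_opNorm_mul_truncPinv_le_one hW hV]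
    _ = ‖G‖ * (1 + ‖ΔU‖ / ε) + ‖ΔC‖ / ε := by ring

/-- Lemma 3.4: perturbation bound
`‖(C + ΔC)(U + ΔU)_ε†‖₂ ≤ ‖(Π_{I_*}ᵀ Q_C)†‖₂ (1 + ‖ΔU‖₂/ε) + ‖ΔC‖₂/ε`,
where `U = Π_{I_*}ᵀ C` and `C = Q_C R_C` is a thin QR factorization. -/
theorem perturbed_trunc_pinv_norm_bound {m k p : ℕ} (ε : ℝ) (hε : 0 < ε)
    (C QC : Matrix (Fin m) (Fin k) ℝ) (RC : Matrix (Fin k) (Fin k) ℝ)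
    (hQR : C = QC * RC) (hQC : QCᵀ * QC = 1) (hCrank : C.rank = k)
    (f : Fin (k + p) → Fin m) (hf : Function.Injective f)
    (hQCrank : ((sel f)ᵀ * QC).rank = k)
    (G : Matrix (Fin k) (Fin (k + p)) ℝ) (hG : IsMP ((sel f)ᵀ * QC) G)
    (ΔC : Matrix (Fin m) (Fin k) ℝ) (ΔU : Matrix (Fin (k + p)) (Fin k) ℝ)
    -- thin SVD data of U + ΔU, with U = Π_{I_*}ᵀ C
    (W : Matrix (Fin (k + p)) (Fin k) ℝ) (V : Matrix (Fin k) (Fin k) ℝ) (σ : Fin k → ℝ)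
    (hW : Wᵀ * W = 1) (hV : Vᵀ * V = 1) (hV' : V * Vᵀ = 1) (hσ : ∀ i, 0 ≤ σ i)
    (hUΔU : (sel f)ᵀ * C + ΔU = W * Matrix.diagonal σ * Vᵀ) :
    spec ((C + ΔC) * (V * Matrix.diagonal (fun i => if ε ≤ σ i then (σ i)⁻¹ else 0) * Wᵀ))
      ≤ spec G * (1 + spec ΔU / ε) + spec ΔC / ε :=
  perturbed_trunc_pinv_norm_bound_general ε hε C QC RC hQR hQC f hQCrank G hG ΔC ΔU W V σ hW hV hUΔU
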